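/- arXiv:1902.06565 — 2 statements merged into one kernel-verified Lean document; each statement's English description precedes it below -/
import Mathlib

section
/- Let S ⊆ ℝ^p be a feasible set, and let d, u ∈ ℝ^p satisfy u_i < d_i for all i. Suppose s* ∈ S is Pareto-nondominated in S and has equal benefit ratios, i.e., there is t ∈ ℝ with r^(i)(s*) = t for every i. Then for every s ∈ S one has min_{1≤i≤p} r^(i)(s) ≤ t; hence s* maximizes min_{1≤i≤p} r^(i)(s) over S (and in particular over the Pareto-nondominated elements of S), so a feasible equal-ratio Pareto-nondominated point is an efficient maxmin (Kalai–Smorodinsky) solution. -/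
theorem equal_ratio_pareto_point_is_maxmin_general
    {p : ℕ} [NeZero p] (S : Set (Fin p → ℝ)) (d u : Fin p → ℝ)
    (hdu : ∀ i, u i < d i)
    (sstar : Fin p → ℝ)
    (hpareto : ∀ s' ∈ S, ∃ k, sstar k ≤ s' k)
    (t : ℝ) (hratio : ∀ i, (d i - sstar i) / (d i - u i) = t) :
    ∀ s ∈ S,
      (Finset.univ.inf' Finset.univ_nonempty
        fun i : Fin p => (d i - s i) / (d i - u i)) ≤ t := by
  intro s hs
  obtain ⟨k, hk⟩ := hpareto s hs
  have hrange : 0 < d k - u k := sub_pos.mpr (hdu k)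
  calc Finset.univ.inf' Finset.univ_nonempty (fun i : Fin p => (d i - s i) / (d i - u i))
      ≤ (d k - s k) / (d k - u k) := Finset.inf'_le _ (Finset.mem_univ k)
    _ ≤ (d k - sstar k) / (d k - u k) := by gcongr
    _ = t := hratio k

/-- A feasible, Pareto-nondominated point with all benefit ratios equal to `t`
is an efficient maxmin (Kalai–Smorodinsky) solution: every `s ∈ S` has minimal
benefit ratio at most `t`. -/
theorem equal_ratio_pareto_point_is_maxmin
    {p : ℕ} [NeZero p] (S : Set (Fin p → ℝ)) (d u : Fin p → ℝ)
    (hdu : ∀ i, u i < d i)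
    (sstar : Fin p → ℝ) (hmem : sstar ∈ S)
    (hpareto : ∀ s' ∈ S, ∃ k, sstar k ≤ s' k)
    (t : ℝ) (hratio : ∀ i, (d i - sstar i) / (d i - u i) = t) :
    ∀ s ∈ S,
      (Finset.univ.inf' Finset.univ_nonempty
        fun i : Fin p => (d i - s i) / (d i - u i)) ≤ t :=
  equal_ratio_pareto_point_is_maxmin_general S d u hdu sstar hpareto t hratio
end

section
/- The copula-space (rank-based) benefit ratios on a finite domain are invariant under strictly increasing transformations of the objectives: let x_1, …, x_N be the elements of a finite domain, let y^(1), …, y^(p) be real-valued objective functions on it, and for s ∈ ℝ^p define r_C^(i)(s) = (1/N) · #{ j : s_i ≤ y^(i)(x_j) }. Let g_1, …, g_p : ℝ → ℝ be strictly increasing and let r̃_C^(i) denote the same quantity computed with objectives g_i ∘ y^(i). Then for every s ∈ ℝ^p and every i, r̃_C^(i)(g_1(s_1), …, g_p(s_p)) = r_C^(i)(s). Consequently, the set of points of the finite image set S = { (y^(1)(x_j), …, y^(p)(x_j)) : 1 ≤ j ≤ N } that are Pareto-nondominated in S and maximize min_{1≤i≤p} r_C^(i) (the copula Kalai–Smorodinsky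 solutions) corresponds, under the componentwise map (g_1, …, g_p), exactly to the analogous set for the transformed objectives. -/
/-- Copula-space (rank-based) benefit ratio of `s` in objective `i`, for
objectives `y` on a finite domain of `N` points:
`r_C^(i)(s) = (1/N) · #{ j : s_i ≤ y^(i)(x_j) }`. -/
noncomputable def rCop {p N : ℕ} (y : Fin p → Fin N → ℝ) (s : Fin p → ℝ) (i : Fin p) : ℝ :=
  ((Finset.univ.filter fun j : Fin N => s i ≤ y i j).card : ℝ) / N

/-- Minimum over objectives of the copula-space benefit ratios. -/
noncomputable def minRCop {p N : ℕ} [NeZero p] (y : Fin p → Fin N → ℝ) (s : Fin p → ℝ) : ℝ :=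
  Finset.univ.inf' Finset.univ_nonempty (rCop y s)

/-- The image set `S = { (y^(1)(x_j), …, y^(p)(x_j)) : 1 ≤ j ≤ N }`. -/
def imageSet {p N : ℕ} (y : Fin p → Fin N → ℝ) : Set (Fin p → ℝ) :=
  {t | ∃ j : Fin N, ∀ i, t i = y i j}

/-- The set of copula Kalai–Smorodinsky (CKS) solutions: Pareto-nondominated
points of the image set maximizing the minimum copula-space benefit ratio over
the Pareto-nondominated points. -/
noncomputable def CKSset {p N : ℕ} [NeZero p] (y : Fin p → Fin N → ℝ) : Set (Fin p → ℝ) :=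
  {s | s ∈ imageSet y ∧ (∀ s' ∈ imageSet y, ∃ k, s k ≤ s' k) ∧
    ∀ s' ∈ imageSet y, (∀ s'' ∈ imageSet y, ∃ k, s' k ≤ s'' k) →
      minRCop y s' ≤ minRCop y s}

/-!
Strictly increasing maps preserve and reflect `≤`, so `Pi.map g` is injective and carries the rank
counts `#{j | s i ≤ y i j}`, the image set and Pareto nondominance for `y` to those for the
transformed objectives; every ingredient of the definition of a CKS solution is thus transported.
-/

section ParetoNondominated

variable {ι α β : Type*}

def ParetoNondominated [LE α] (S : Set (ι → α)) (s : ι → α) : Prop :=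
  ∀ s' ∈ S, ∃ k, s k ≤ s' k

theorem paretoNondominated_piMap_image_iff [LinearOrder α] [Preorder β] {g : ι → α → β}
    (hg : ∀ i, StrictMono (g i)) {S : Set (ι → α)} {s : ι → α} :
    ParetoNondominated (Pi.map g '' S) (Pi.map g s) ↔ ParetoNondominated S s := by
  simp only [ParetoNondominated, Set.forall_mem_image, Pi.map_apply, (hg _).le_iff_le]

end ParetoNondominated

section CKS

variable {p N : ℕ} {y : Fin p → Fin N → ℝ} {g : Fin p → ℝ → ℝ}

theorem rCop_comp_strictMono (hg : ∀ i, StrictMono (g i)) (s : Fin p → ℝ) (i : Fin p) :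
    rCop (fun i j => g i (y i j)) (Pi.map g s) i = rCop y s i := by
  simp only [rCop, Pi.map_apply, (hg i).le_iff_le]

theorem minRCop_comp_strictMono [NeZero p] (hg : ∀ i, StrictMono (g i)) (s : Fin p → ℝ) :
    minRCop (fun i j => g i (y i j)) (Pi.map g s) = minRCop y s :=
  Finset.inf'_congr _ rfl fun i _ => rCop_comp_strictMono hg s i

theorem imageSet_comp : imageSet (fun i j => g i (y i j)) = Pi.map g '' imageSet y := by
  ext t
  constructor
  · rintro ⟨j, hj⟩
    exact ⟨fun i => y i j, ⟨j, fun _ => rfl⟩, funext fun i => (hj i).symm⟩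
  · rintro ⟨s, ⟨j, hj⟩, rfl⟩
    exact ⟨j, fun i => congrArg (g i) (hj i)⟩

theorem mem_CKSset_iff [NeZero p] {s : Fin p → ℝ} :
    s ∈ CKSset y ↔ s ∈ imageSet y ∧ ParetoNondominated (imageSet y) s ∧
      ∀ s' ∈ imageSet y, ParetoNondominated (imageSet y) s' → minRCop y s' ≤ minRCop y s :=
  Iff.rfl

theorem piMap_mem_CKSset_comp_iff [NeZero p] (hg : ∀ i, StrictMono (g i)) {s : Fin p → ℝ} :
    Pi.map g s ∈ CKSset (fun i j => g i (y i j)) ↔ s ∈ CKSset y := by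
  simp only [mem_CKSset_iff, imageSet_comp, Set.forall_mem_image,
    (Function.Injective.piMap fun i => (hg i).injective).mem_set_image,
    paretoNondominated_piMap_image_iff hg, minRCop_comp_strictMono hg]

end CKS

theorem CKS_invariant_under_strictMono_transforms_general
    {p N : ℕ} [NeZero p] (y : Fin p → Fin N → ℝ)
    (g : Fin p → ℝ → ℝ) (hg : ∀ i, StrictMono (g i)) :
    (∀ (s : Fin p → ℝ) (i : Fin p),
      rCop (fun i j => g i (y i j)) (fun k => g k (s k)) i = rCop y s i) ∧
    ((fun s : Fin p → ℝ => fun i => g i (s i)) '' CKSset y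
      = CKSset (fun i j => g i (y i j))) := by
  refine ⟨rCop_comp_strictMono hg, Set.ext fun t => ⟨?_, fun ht => ?_⟩⟩
  · rintro ⟨s, hs, rfl⟩
    exact (piMap_mem_CKSset_comp_iff hg).2 hs
  · obtain ⟨s, -, rfl⟩ : t ∈ Pi.map g '' imageSet y := imageSet_comp ▸ ht.1
    exact ⟨s, (piMap_mem_CKSset_comp_iff hg).1 ht, rfl⟩

/-- Copula-space benefit ratios on a finite domain are invariant under strictly
increasing transformations of the objectives, and the set of CKS solutions for
the transformed objectives is exactly the componentwise image of the set of CKS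
solutions for the original objectives. -/
theorem CKS_invariant_under_strictMono_transforms
    {p N : ℕ} [NeZero p] (hN : 0 < N) (y : Fin p → Fin N → ℝ)
    (g : Fin p → ℝ → ℝ) (hg : ∀ i, StrictMono (g i)) :
    (∀ (s : Fin p → ℝ) (i : Fin p),
      rCop (fun i j => g i (y i j)) (fun k => g k (s k)) i = rCop y s i) ∧
    ((fun s : Fin p → ℝ => fun i => g i (s i)) '' CKSset y
      = CKSset (fun i j => g i (y i j))) :=
  CKS_invariant_under_strictMono_transforms_general y g hg
end
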